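/- Let N ≥ 1, let u ∈ ℂ^N with u ≠ 0, let θ ∈ ℂ with θ ≠ 0, let σ_u ≥ 0 and σ_e > 0. For f ∈ ℂ^N define φ(f) = ∑_{i} conj(f i) * (u i) and M(f) = ((|θ|² * |φ(f) − 1|² + σ_e² * ‖f‖²) / (|θ|² * |φ(f)|² + σ_e² * ‖f‖²)) * (σ_u² + σ_e² / |θ|²), and suppose σ_u² + σ_e²/|θ|² > 0. Then f_MVU = u / ‖u‖² is the UNIQUE minimizer: for every f ∈ ℂ^N with f ≠ 0 and f ≠ u / ‖u‖², we have M(u / ‖u‖²) < M(f). -/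

import Mathlib

noncomputable section

/-- `phi u f = f^H u = ∑ i, conj (f i) * u i`. -/
def phi {N : ℕ} (u f : Fin N → ℂ) : ℂ := ∑ i, (starRingEnd ℂ) (f i) * u i

/-- `nsq f = ‖f‖² = ∑ i, |f i|²`. -/
def nsq {N : ℕ} (f : Fin N → ℂ) : ℝ := ∑ i, ‖f i‖ ^ 2

/-- The zeroth-order excess MSE of the ZF input estimator, deterministic parameter. -/
def Mdet {N : ℕ} (u : Fin N → ℂ) (θ : ℂ) (σu σe : ℝ) (f : Fin N → ℂ) : ℝ :=
  ((‖θ‖ ^ 2 * ‖phi u f - 1‖ ^ 2 + σe ^ 2 * nsq f) /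
      (‖θ‖ ^ 2 * ‖phi u f‖ ^ 2 + σe ^ 2 * nsq f)) *
    (σu ^ 2 + σe ^ 2 / ‖θ‖ ^ 2)

/-- The MVU estimating filter `f_MVU = u / ‖u‖²`. -/
def fMVU {N : ℕ} (u : Fin N → ℂ) : Fin N → ℂ := fun i => u i / ((nsq u : ℝ) : ℂ)

lemma nsq_pos {N : ℕ} {g : Fin N → ℂ} (hg : g ≠ 0) : 0 < nsq g := by
  rcases Function.ne_iff.1 hg with ⟨i, hi⟩
  have h : (0:ℝ) < ‖g i‖ ^ 2 :=
    pow_pos (norm_pos_iff.2 hi) 2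
  exact lt_of_lt_of_le h (Finset.single_le_sum (f := fun j => ‖g j‖ ^ 2)
    (fun j _ => by positivity) (Finset.mem_univ i))

lemma sum_conj_mul_self {N : ℕ} (g : Fin N → ℂ) :
    ∑ i, (starRingEnd ℂ) (g i) * g i = ((nsq g : ℝ) : ℂ) := by
  rw [nsq]; push_cast
  refine Finset.sum_congr rfl fun i _ => ?_
  rw [← Complex.normSq_eq_conj_mul_self, ← Complex.sq_norm]; push_cast; ring

lemma phi_fMVU {N : ℕ} (u : Fin N → ℂ) (hu : u ≠ 0) : phi u (fMVU u) = 1 := by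
  have hnu : ((nsq u : ℝ) : ℂ) ≠ 0 := by exact_mod_cast (nsq_pos hu).ne'
  simp only [phi, fMVU, map_div₀, Complex.conj_ofReal, div_mul_eq_mul_div, ← Finset.sum_div]
  rw [sum_conj_mul_self, div_self hnu]

lemma nsq_fMVU {N : ℕ} (u : Fin N → ℂ) (hu : u ≠ 0) : nsq (fMVU u) = (nsq u)⁻¹ := by
  have hnu : (0:ℝ) < nsq u := nsq_pos hu
  simp only [nsq, fMVU, norm_div, Complex.norm_real, Real.norm_eq_abs, abs_of_pos hnu, div_pow,
    ← Finset.sum_div]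
  rw [show (∑ i, ‖u i‖ ^ 2) = nsq u from rfl, abs_of_pos hnu]
  field_simp

lemma phi_eq_inner {N : ℕ} (u f : Fin N → ℂ) :
    phi u f = inner ℂ ((WithLp.equiv 2 (Fin N → ℂ)).symm f) ((WithLp.equiv 2 (Fin N → ℂ)).symm u) := by
  simp [phi, PiLp.inner_apply, RCLike.inner_apply, mul_comm]

lemma nsq_eq_norm_sq {N : ℕ} (f : Fin N → ℂ) :
    nsq f = ‖(WithLp.equiv 2 (Fin N → ℂ)).symm f‖ ^ 2 := by
  rw [EuclideanSpace.norm_eq, Real.sq_sqrt (by positivity)]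
  simp [nsq]

lemma cauchy {N : ℕ} (u f : Fin N → ℂ) :
    ‖phi u f‖ ^ 2 ≤ nsq f * nsq u := by
  rw [phi_eq_inner, nsq_eq_norm_sq, nsq_eq_norm_sq]
  have h := norm_inner_le_norm (𝕜 := ℂ) ((WithLp.equiv 2 (Fin N → ℂ)).symm f)
    ((WithLp.equiv 2 (Fin N → ℂ)).symm u)
  nlinarith [norm_nonneg (inner (𝕜 := ℂ) ((WithLp.equiv 2 (Fin N → ℂ)).symm f)
    ((WithLp.equiv 2 (Fin N → ℂ)).symm u)), norm_nonneg ((WithLp.equiv 2 (Fin N → ℂ)).symm f),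
    norm_nonneg ((WithLp.equiv 2 (Fin N → ℂ)).symm u)]

/-- equality in CS + phi = 1 forces f = fMVU u -/
lemma eq_case {N : ℕ} {u f : Fin N → ℂ} (hu : u ≠ 0) (hf : f ≠ 0)
    (heq : ‖phi u f‖ ^ 2 = nsq f * nsq u) (hphi : phi u f = 1) :
    f = fMVU u := by
  have hnf : (0:ℝ) < nsq f := nsq_pos hf
  have hnu : (0:ℝ) < nsq u := nsq_pos hu
  set F := (WithLp.equiv 2 (Fin N → ℂ)).symm f with hF
  set U := (WithLp.equiv 2 (Fin N → ℂ)).symm u with hU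
  have hF0 : F ≠ 0 := by
    intro h; apply hf
    have := congrArg (WithLp.equiv 2 (Fin N → ℂ)) h
    rw [hF] at this
    simpa using this
  have hU0 : U ≠ 0 := by
    intro h; apply hu
    have := congrArg (WithLp.equiv 2 (Fin N → ℂ)) h
    rw [hU] at this
    simpa using this
  have hnorm : ‖(inner ℂ F U : ℂ)‖ = ‖F‖ * ‖U‖ := by
    have h1 : ‖phi u f‖ = ‖(inner ℂ F U : ℂ)‖ := by
      rw [phi_eq_inner]
    have h2 : nsq f = ‖F‖^2 := nsq_eq_norm_sq f
    have h3 : nsq u = ‖U‖^2 := nsq_eq_norm_sq u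
    rw [h2, h3] at heq
    rw [← h1]
    have hmn : 0 ≤ ‖F‖ * ‖U‖ := by positivity
    nlinarith [norm_nonneg (phi u f), norm_inner_le_norm (𝕜 := ℂ) F U, h1]
  obtain ⟨r, hr0, hrU⟩ := (norm_inner_eq_norm_iff hF0 hU0).1 hnorm
  -- u i = r * f i
  have hui : ∀ i, u i = r * f i := fun i => by
    have := congrArg (fun x => (WithLp.equiv 2 (Fin N → ℂ) x) i) hrU
    simpa [hU, hF] using this
  -- phi u f = r * nsq f
  have hphif : phi u f = r * ((nsq f : ℝ) : ℂ) := by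
    simp only [phi, hui]
    simp only [mul_left_comm]
    rw [← Finset.mul_sum, sum_conj_mul_self]
  have hnfC : ((nsq f : ℝ) : ℂ) ≠ 0 := by exact_mod_cast hnf.ne'
  have hr : r = ((nsq f : ℝ) : ℂ)⁻¹ := by
    rw [hphi] at hphif
    exact eq_inv_of_mul_eq_one_left (by linear_combination -hphif)
  have hnuval : nsq u = (nsq f)⁻¹ := by
    simp only [nsq, hui, hr, norm_mul, mul_pow, norm_inv, Complex.norm_real, Real.norm_eq_abs,
      abs_of_pos hnf, ← Finset.mul_sum]
    rw [show (∑ i, ‖f i‖ ^ 2) = nsq f from rfl, abs_of_pos hnf]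
    field_simp
  funext i
  rw [fMVU, hnuval, hui i, hr]
  have h5 : ((nsq f)⁻¹ : ℝ) = ((nsq f : ℝ) : ℂ)⁻¹ := by push_cast; ring
  push_cast
  field_simp

/-- Sharpened Proposition 1: the MVU filter is the UNIQUE minimizer of the
deterministic zeroth-order excess MSE of the ZF input estimator. -/
theorem mvu_unique_minimizer_det_zeroth_order_excess_mse
    (N : ℕ) (hN : 1 ≤ N) (u : Fin N → ℂ) (hu : u ≠ 0)
    (θ : ℂ) (hθ : θ ≠ 0) (σu σe : ℝ) (hσu : 0 ≤ σu) (hσe : 0 < σe)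
    (hpos : 0 < σu ^ 2 + σe ^ 2 / ‖θ‖ ^ 2) :
    ∀ f : Fin N → ℂ, f ≠ 0 → f ≠ fMVU u →
      Mdet u θ σu σe (fMVU u) < Mdet u θ σu σe f := by
  intro f hf hfne
  have hnf : (0:ℝ) < nsq f := nsq_pos hf
  have hnu : (0:ℝ) < nsq u := nsq_pos hu
  set a := ‖θ‖ ^ 2 with ha
  have hapos : (0:ℝ) < a := pow_pos (norm_pos_iff.2 hθ) 2
  set s := σe ^ 2 with hs
  have hspos : (0:ℝ) < s := pow_pos hσe 2
  set n := nsq f with hn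
  set nu := nsq u with hnuu
  set P := ‖phi u f‖ with hP
  set Q := ‖phi u f - 1‖ with hQ
  have hPn : 0 ≤ P := norm_nonneg _
  have hQn : 0 ≤ Q := norm_nonneg _
  have hM1 : Mdet u θ σu σe (fMVU u)
      = (s * nu⁻¹ / (a + s * nu⁻¹)) * (σu ^ 2 + s / a) := by
    rw [Mdet, phi_fMVU u hu, nsq_fMVU u hu]
    norm_num
    rfl
  have hM2 : Mdet u θ σu σe f
      = ((a * Q ^ 2 + s * n) / (a * P ^ 2 + s * n)) * (σu ^ 2 + s / a) := rfl
  rw [hM1, hM2]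
  have hCpos : (0:ℝ) < σu ^ 2 + s / a := hpos
  refine mul_lt_mul_of_pos_right ?_ hCpos
  have hd1 : (0:ℝ) < a + s * nu⁻¹ := by positivity
  have hd2 : (0:ℝ) < a * P ^ 2 + s * n := by positivity
  rw [div_lt_div_iff₀ hd1 hd2]
  -- key inequality after clearing nu⁻¹
  have hcs : P ^ 2 ≤ n * nu := cauchy u f
  have T : s * (a * P ^ 2 + s * n) < (a * Q ^ 2 + s * n) * (a * nu + s) := by
    rcases lt_or_eq_of_le hcs with hlt | hEq
    · nlinarith [mul_lt_mul_of_pos_left hlt (mul_pos hspos hapos),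
        mul_nonneg (mul_nonneg (mul_nonneg hapos.le hapos.le) hnu.le) (sq_nonneg Q),
        mul_nonneg (mul_nonneg hapos.le hspos.le) (sq_nonneg Q)]
    · have hphi1 : phi u f - 1 ≠ 0 := by
        intro h0
        exact hfne (eq_case hu hf hEq (by linear_combination h0))
      have hQpos : 0 < Q ^ 2 := pow_pos (norm_pos_iff.2 hphi1) 2
      nlinarith [mul_pos (mul_pos hapos hapos) (mul_pos hnu hQpos),
        mul_pos (mul_pos hapos hspos) hQpos]
  have hrw : (a * Q ^ 2 + s * n) * (a + s * nu⁻¹)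
      = nu⁻¹ * ((a * Q ^ 2 + s * n) * (a * nu + s)) := by
    field_simp
  rw [hrw, show s * nu⁻¹ * (a * P ^ 2 + s * n) = nu⁻¹ * (s * (a * P ^ 2 + s * n)) by ring]
  exact mul_lt_mul_of_pos_left T (inv_pos.2 hnu)
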